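/- For a pluriharmonic function $f$ on an open set $U \subseteq \mathbb{C}^n$ (i.e., $\partial^2 f/\partial z_\alpha \partial \bar z_\beta = 0$ for all $\alpha,\beta$), the function $\log(1 + |\nabla f|^2)$ is plurisubharmonic on $U$, where $|\nabla f|^2 = \sum_\alpha |\partial f/\partial z_\alpha|^2$. -/

import Mathlib

noncomputable section

/-- The Wirtinger derivative `∂f/∂z_α` of `f : ℂⁿ → ℂ`, as a real directional
derivative combination `(∂_x - i ∂_y)/2` along the `α`-th coordinate. -/
def wD {n : ℕ} (f : EuclideanSpace ℂ (Fin n) → ℂ) (α : Fin n)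
    (z : EuclideanSpace ℂ (Fin n)) : ℂ :=
  (lineDeriv ℝ f z (EuclideanSpace.single α 1) -
    Complex.I * lineDeriv ℝ f z (EuclideanSpace.single α Complex.I)) / 2

/-- The conjugate Wirtinger derivative `∂f/∂z̄_α = (∂_x + i ∂_y)/2`. -/
def wDbar {n : ℕ} (f : EuclideanSpace ℂ (Fin n) → ℂ) (α : Fin n)
    (z : EuclideanSpace ℂ (Fin n)) : ℂ :=
  (lineDeriv ℝ f z (EuclideanSpace.single α 1) +
    Complex.I * lineDeriv ℝ f z (EuclideanSpace.single α Complex.I)) / 2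

open Complex Finset

namespace Stmt1Aux

variable {n : ℕ} {𝔽 : Type*} [NormedAddCommGroup 𝔽] [NormedSpace ℝ 𝔽]

lemma wD_apply {F : EuclideanSpace ℂ (Fin n) → ℂ} (hF : Differentiable ℝ F) (α : Fin n)
    (ζ : EuclideanSpace ℂ (Fin n)) :
    wD F α ζ = (fderiv ℝ F ζ (EuclideanSpace.single α 1)
      - Complex.I * fderiv ℝ F ζ (EuclideanSpace.single α Complex.I)) / 2 := by
  rw [wD, (hF ζ).lineDeriv_eq_fderiv, (hF ζ).lineDeriv_eq_fderiv]

lemma wDbar_apply {F : EuclideanSpace ℂ (Fin n) → ℂ} (hF : Differentiable ℝ F) (α : Fin n)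
    (ζ : EuclideanSpace ℂ (Fin n)) :
    wDbar F α ζ = (fderiv ℝ F ζ (EuclideanSpace.single α 1)
      + Complex.I * fderiv ℝ F ζ (EuclideanSpace.single α Complex.I)) / 2 := by
  rw [wDbar, (hF ζ).lineDeriv_eq_fderiv, (hF ζ).lineDeriv_eq_fderiv]

lemma dd_contDiff {m : ℕ} {F : EuclideanSpace ℂ (Fin n) → 𝔽}
    (hF : ContDiff ℝ ((m : WithTop ℕ∞) + 1) F) (v : EuclideanSpace ℂ (Fin n)) :
    ContDiff ℝ m (fun ζ => fderiv ℝ F ζ v) :=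
  (hF.fderiv_right le_rfl).clm_apply contDiff_const

lemma dd_fderiv {F : EuclideanSpace ℂ (Fin n) → 𝔽} (hF : ContDiff ℝ 2 F)
    (z v u : EuclideanSpace ℂ (Fin n)) :
    fderiv ℝ (fun ζ => fderiv ℝ F ζ v) z u = fderiv ℝ (fderiv ℝ F) z u v := by
  have hd : DifferentiableAt ℝ (fderiv ℝ F) z := by
    have : ContDiff ℝ 1 (fderiv ℝ F) := hF.fderiv_right (by norm_num)
    exact (this.differentiable (by norm_num)) z
  rw [show (fun ζ => fderiv ℝ F ζ v) = fun ζ => (fderiv ℝ F ζ) ((fun _ => v) ζ) from rfl,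
    fderiv_clm_apply hd (differentiableAt_const v)]
  simp

lemma hasDerivAt_normSq {G : ℝ → ℂ} {G' : ℂ} {t : ℝ} (hG : HasDerivAt G G' t) :
    HasDerivAt (fun s => Complex.normSq (G s)) (2 * ((starRingEnd ℂ) (G t) * G').re) t := by
  have hre : HasDerivAt (fun s => (G s).re) G'.re t :=
    Complex.reCLM.hasFDerivAt.comp_hasDerivAt t hG
  have him : HasDerivAt (fun s => (G s).im) G'.im t :=
    Complex.imCLM.hasFDerivAt.comp_hasDerivAt t hG
  have h := (hre.fun_mul hre).fun_add (him.fun_mul him)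
  have heq : (fun s => (G s).re * (G s).re + (G s).im * (G s).im)
      = fun s => Complex.normSq (G s) := by
    funext s; rw [Complex.normSq_apply]
  rw [heq] at h
  refine h.congr_deriv ?_
  rw [Complex.mul_re, Complex.conj_re, Complex.conj_im]
  ring

lemma clm_p_apply {M : Type*} [NormedAddCommGroup M] [NormedSpace ℝ M]
    (T : EuclideanSpace ℂ (Fin n) →L[ℝ] M) (c d : Fin n → ℝ) :
    T (∑ α, (c α • EuclideanSpace.single α (1:ℂ) + d α • EuclideanSpace.single α Complex.I))
      = ∑ α, (c α • T (EuclideanSpace.single α 1) + d α • T (EuclideanSpace.single α Complex.I)) := by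
  rw [map_sum]
  simp

lemma sum_symm_eq {m : ℕ} (c d : Fin m → Fin m → ℝ)
    (h : ∀ α β, c α β + c β α = d α β + d β α) :
    ∑ α, ∑ β, c α β = ∑ α, ∑ β, d α β := by
  have h2 : ∑ α, ∑ β, (c α β + c β α) = ∑ α, ∑ β, (d α β + d β α) :=
    Finset.sum_congr rfl fun α _ => Finset.sum_congr rfl fun β _ => h α β
  have hc : ∑ α, ∑ β, c β α = ∑ α, ∑ β, c α β := Finset.sum_comm
  have hd : ∑ α, ∑ β, d β α = ∑ α, ∑ β, d α β := Finset.sum_comm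
  simp only [Finset.sum_add_distrib] at h2
  rw [hc, hd] at h2
  linarith

end Stmt1Aux

set_option maxHeartbeats 2000000 in
set_option maxRecDepth 8000 in
open Stmt1Aux in
/-- for a smooth pluriharmonic `f` on an open `U ⊆ ℂⁿ`,
`log (1 + |∇f|²)` is plurisubharmonic on `U` (its complex Hessian is
positive semidefinite at every point of `U`). -/
theorem stmt1 (n : ℕ) (U : Set (EuclideanSpace ℂ (Fin n))) (hU : IsOpen U)
    (f : EuclideanSpace ℂ (Fin n) → ℝ) (hf : ContDiff ℝ (⊤ : ℕ∞) f)
    (hph : ∀ z ∈ U, ∀ α β, wDbar (wD (fun w => (f w : ℂ)) α) β z = 0) :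
    ∀ z ∈ U, ∀ w : Fin n → ℂ,
      0 ≤ (∑ α, ∑ β,
        wD (wDbar (fun ζ => ((Real.log (1 + ∑ γ,
          Complex.normSq (wD (fun w' => (f w' : ℂ)) γ ζ)) : ℝ) : ℂ)) β) α z
        * w α * (starRingEnd ℂ) (w β)).re := by
  intro z hz w
  classical
  set f' : EuclideanSpace ℂ (Fin n) → ℂ := fun w => (f w : ℂ) with hf'def
  have hfC : ContDiff ℝ 4 f' := Complex.ofRealCLM.contDiff.comp (hf.of_le (by norm_cast))
  set g : Fin n → EuclideanSpace ℂ (Fin n) → ℂ := wD f' with hgdef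
  have hgC : ∀ γ, ContDiff ℝ 3 (g γ) := by
    intro γ
    have h1 : g γ = fun ζ => (fderiv ℝ f' ζ (EuclideanSpace.single γ 1)
        - Complex.I * fderiv ℝ f' ζ (EuclideanSpace.single γ Complex.I)) / 2 :=
      funext (wD_apply (hfC.differentiable (by norm_num)) γ)
    rw [h1]
    have h2 := dd_contDiff (m := 3) (F := f') (by exact_mod_cast hfC)
    exact ((h2 _).sub (contDiff_const.mul (h2 _))).div_const 2
  -- Cauchy-Riemann for g on U, coordinate directions
  have hgD : ∀ γ, Differentiable ℝ (g γ) := fun γ => (hgC γ).differentiable (by norm_num)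
  have hCR : ∀ ζ ∈ U, ∀ γ β, fderiv ℝ (g γ) ζ (EuclideanSpace.single β Complex.I)
      = Complex.I * fderiv ℝ (g γ) ζ (EuclideanSpace.single β 1) := by
    intro ζ hζ γ β
    have h := hph ζ hζ γ β
    rw [wDbar_apply (hgD γ) β ζ] at h
    linear_combination (-2*Complex.I) * h
      + (fderiv ℝ (g γ) ζ (EuclideanSpace.single β Complex.I)) * Complex.I_mul_I
  -- the direction vectors p and I•p
  set p : EuclideanSpace ℂ (Fin n) :=
    ∑ α, ((w α).re • EuclideanSpace.single α (1:ℂ)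
      + (w α).im • EuclideanSpace.single α Complex.I) with hpdef
  set pI : EuclideanSpace ℂ (Fin n) :=
    ∑ α, ((-(w α).im) • EuclideanSpace.single α (1:ℂ)
      + (w α).re • EuclideanSpace.single α Complex.I) with hpIdef
  -- Cauchy-Riemann in directions p, pI
  have hCRp : ∀ ζ ∈ U, ∀ γ, fderiv ℝ (g γ) ζ pI = Complex.I * fderiv ℝ (g γ) ζ p := by
    intro ζ hζ γ
    rw [hpdef, hpIdef, clm_p_apply (fderiv ℝ (g γ) ζ), clm_p_apply (fderiv ℝ (g γ) ζ),
      Finset.mul_sum]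
    refine Finset.sum_congr rfl fun β _ => ?_
    rw [hCR ζ hζ γ β]
    simp only [Complex.real_smul, Complex.ofReal_neg]
    linear_combination (-((w β).im : ℂ) * fderiv ℝ (g γ) ζ (EuclideanSpace.single β 1))
      * Complex.I_mul_I
  -- symmetry of the second derivative of g
  have hSg : ∀ γ (v u' : EuclideanSpace ℂ (Fin n)),
      fderiv ℝ (fderiv ℝ (g γ)) z v u' = fderiv ℝ (fderiv ℝ (g γ)) z u' v := fun γ =>
    (hgC γ).contDiffAt.isSymmSndFDerivAt (by norm_num)
  have hgC2 : ∀ γ, ContDiff ℝ 2 (g γ) := fun γ => (hgC γ).of_le (by norm_num)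
  have hddgC : ∀ γ (v : EuclideanSpace ℂ (Fin n)),
      ContDiff ℝ 2 (fun ζ => fderiv ℝ (g γ) ζ v) := fun γ v =>
    dd_contDiff (m := 2) (by exact_mod_cast (hgC γ)) v
  -- second-order Cauchy-Riemann at z
  have hCR2 : ∀ γ, fderiv ℝ (fun ζ => fderiv ℝ (g γ) ζ pI) z pI
      = - fderiv ℝ (fun ζ => fderiv ℝ (g γ) ζ p) z p := by
    intro γ
    have hEq : (fun ζ => fderiv ℝ (g γ) ζ pI)
        =ᶠ[nhds z] (fun ζ => Complex.I * fderiv ℝ (g γ) ζ p) := by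
      filter_upwards [hU.mem_nhds hz] with ζ hζ
      exact hCRp ζ hζ γ
    have hdp : Differentiable ℝ (fun ζ => fderiv ℝ (g γ) ζ p) :=
      (hddgC γ p).differentiable two_ne_zero
    calc fderiv ℝ (fun ζ => fderiv ℝ (g γ) ζ pI) z pI
        = fderiv ℝ (fun ζ => Complex.I * fderiv ℝ (g γ) ζ p) z pI := by
          rw [hEq.fderiv_eq]
      _ = Complex.I * fderiv ℝ (fun ζ => fderiv ℝ (g γ) ζ p) z pI := by
          rw [fderiv_const_mul (hdp z) Complex.I]; simp
      _ = Complex.I * fderiv ℝ (fderiv ℝ (g γ)) z pI p := by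
          rw [dd_fderiv (hgC2 γ)]
      _ = Complex.I * fderiv ℝ (fderiv ℝ (g γ)) z p pI := by rw [hSg γ pI p]
      _ = Complex.I * fderiv ℝ (fun ζ => fderiv ℝ (g γ) ζ pI) z p := by
          rw [dd_fderiv (hgC2 γ)]
      _ = Complex.I * fderiv ℝ (fun ζ => Complex.I * fderiv ℝ (g γ) ζ p) z p := by
          rw [hEq.fderiv_eq]
      _ = Complex.I * (Complex.I * fderiv ℝ (fun ζ => fderiv ℝ (g γ) ζ p) z p) := by
          rw [fderiv_const_mul (hdp z) Complex.I]; simp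
      _ = - fderiv ℝ (fun ζ => fderiv ℝ (g γ) ζ p) z p := by
          rw [← mul_assoc, Complex.I_mul_I, neg_one_mul]
  -- the potential and its smoothness
  set u' : EuclideanSpace ℂ (Fin n) → ℂ :=
    fun ζ => ((Real.log (1 + ∑ γ, Complex.normSq (g γ ζ)) : ℝ) : ℂ) with hu'def
  set uR : EuclideanSpace ℂ (Fin n) → ℝ :=
    fun ζ => Real.log (1 + ∑ γ, Complex.normSq (g γ ζ)) with huRdef
  set qR : EuclideanSpace ℂ (Fin n) → ℝ := fun ζ => ∑ γ, Complex.normSq (g γ ζ) with hqRdef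
  have hqpos : ∀ ζ, 0 < 1 + qR ζ := by
    intro ζ
    have : 0 ≤ qR ζ := Finset.sum_nonneg fun γ _ => Complex.normSq_nonneg _
    linarith
  have hqC : ContDiff ℝ 3 qR := by
    have h : ∀ γ : Fin n, ContDiff ℝ 3 (fun ζ => Complex.normSq (g γ ζ)) := by
      intro γ
      have h1 : (fun ζ => Complex.normSq (g γ ζ))
          = fun ζ => (g γ ζ).re * (g γ ζ).re + (g γ ζ).im * (g γ ζ).im :=
        funext fun ζ => Complex.normSq_apply _
      rw [h1]
      have hre : ContDiff ℝ 3 fun ζ => (g γ ζ).re := Complex.reCLM.contDiff.comp (hgC γ)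
      have him : ContDiff ℝ 3 fun ζ => (g γ ζ).im := Complex.imCLM.contDiff.comp (hgC γ)
      exact (hre.mul hre).add (him.mul him)
    exact ContDiff.sum fun γ _ => h γ
  have huC : ContDiff ℝ 3 uR := by
    rw [huRdef]
    refine contDiff_iff_contDiffAt.2 fun ζ => ?_
    exact ContDiffAt.log (contDiffAt_const.add hqC.contDiffAt) (hqpos ζ).ne'
  have huD : Differentiable ℝ uR := huC.differentiable (by norm_num)
  have hu'eq : u' = (⇑Complex.ofRealCLM) ∘ uR := rfl
  have hu'C : ContDiff ℝ 3 u' := by rw [hu'eq]; exact Complex.ofRealCLM.contDiff.comp huC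
  have hu'Diff : Differentiable ℝ u' := hu'C.differentiable (by norm_num)
  set B := fderiv ℝ (fderiv ℝ uR) z with hBdef
  have hSu : ∀ v u₂, B v u₂ = B u₂ v := huC.contDiffAt.isSymmSndFDerivAt (by norm_num)
  have hdduC : ∀ v, ContDiff ℝ 2 (fun ζ => fderiv ℝ uR ζ v) := fun v =>
    dd_contDiff (m := 2) (by exact_mod_cast huC) v
  have hu'D : ∀ (ζ v : EuclideanSpace ℂ (Fin n)),
      fderiv ℝ u' ζ v = ((fderiv ℝ uR ζ v : ℝ) : ℂ) := by
    intro ζ v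
    have h : HasFDerivAt u' (Complex.ofRealCLM.comp (fderiv ℝ uR ζ)) ζ := by
      rw [hu'eq]
      exact Complex.ofRealCLM.hasFDerivAt.comp ζ (huD ζ).hasFDerivAt
    rw [h.fderiv]; simp
  -- Claim 1: formula for the complex Hessian entries
  have claim1 : ∀ α β, wD (wDbar u' β) α z =
      (((B (EuclideanSpace.single α 1) (EuclideanSpace.single β 1) : ℝ) : ℂ)
        + Complex.I * ((B (EuclideanSpace.single α 1) (EuclideanSpace.single β Complex.I) : ℝ) : ℂ)
        - Complex.I * ((B (EuclideanSpace.single α Complex.I) (EuclideanSpace.single β 1) : ℝ) : ℂ)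
        + ((B (EuclideanSpace.single α Complex.I) (EuclideanSpace.single β Complex.I) : ℝ) : ℂ)) / 4 := by
    intro α β
    have hwdbar : wDbar u' β = fun ζ => (2⁻¹ : ℂ) *
        (((fderiv ℝ uR ζ (EuclideanSpace.single β 1) : ℝ) : ℂ)
          + Complex.I * ((fderiv ℝ uR ζ (EuclideanSpace.single β Complex.I) : ℝ) : ℂ)) := by
      funext ζ
      rw [wDbar_apply hu'Diff β ζ, hu'D ζ _, hu'D ζ _]
      ring
    rw [hwdbar]
    have h1 : ∀ (v : EuclideanSpace ℂ (Fin n)) ζ0,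
        HasFDerivAt (fun ζ => ((fderiv ℝ uR ζ v : ℝ) : ℂ))
          (Complex.ofRealCLM.comp (fderiv ℝ (fun ζ => fderiv ℝ uR ζ v) ζ0)) ζ0 := fun v ζ0 =>
      Complex.ofRealCLM.hasFDerivAt.comp ζ0
        (((hdduC v).differentiable two_ne_zero) ζ0).hasFDerivAt
    have hΦ : ∀ ζ0, HasFDerivAt (fun ζ => (2⁻¹ : ℂ) *
        (((fderiv ℝ uR ζ (EuclideanSpace.single β 1) : ℝ) : ℂ)
          + Complex.I * ((fderiv ℝ uR ζ (EuclideanSpace.single β Complex.I) : ℝ) : ℂ)))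
        ((2⁻¹ : ℂ) • ((Complex.ofRealCLM.comp
            (fderiv ℝ (fun ζ => fderiv ℝ uR ζ (EuclideanSpace.single β 1)) ζ0))
          + Complex.I • (Complex.ofRealCLM.comp
            (fderiv ℝ (fun ζ => fderiv ℝ uR ζ (EuclideanSpace.single β Complex.I)) ζ0)))) ζ0 :=
      fun ζ0 => (((h1 _ ζ0).add ((h1 _ ζ0).const_mul Complex.I)).const_mul (2⁻¹ : ℂ))
    rw [wD_apply (fun ζ0 => (hΦ ζ0).differentiableAt) α z, (hΦ z).fderiv]
    simp only [ContinuousLinearMap.smul_apply, ContinuousLinearMap.add_apply,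
      ContinuousLinearMap.comp_apply, Complex.ofRealCLM_apply, smul_eq_mul,
      dd_fderiv (huC.of_le (by norm_num : (2 : WithTop ℕ∞) ≤ 3)) z]
    rw [← hBdef]
    linear_combination (-((B (EuclideanSpace.single α Complex.I)
      (EuclideanSpace.single β Complex.I) : ℝ) : ℂ) / 4) * Complex.I_mul_I
  -- Step I: reduce to positivity of 4⁻¹ (B p p + B pI pI)
  have hsum : (∑ α, ∑ β, wD (wDbar u' β) α z * w α * (starRingEnd ℂ) (w β)).re
      = ∑ α, ∑ β, (4⁻¹ : ℝ) *
        ((B (EuclideanSpace.single α 1) (EuclideanSpace.single β 1)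
            + B (EuclideanSpace.single α Complex.I) (EuclideanSpace.single β Complex.I))
          * ((w α).re * (w β).re + (w α).im * (w β).im)
        - (B (EuclideanSpace.single α 1) (EuclideanSpace.single β Complex.I)
            - B (EuclideanSpace.single α Complex.I) (EuclideanSpace.single β 1))
          * ((w α).im * (w β).re - (w α).re * (w β).im)) := by
    rw [Complex.re_sum]
    refine Finset.sum_congr rfl fun α _ => ?_
    rw [Complex.re_sum]
    refine Finset.sum_congr rfl fun β _ => ?_
    rw [claim1 α β]
    simp only [Complex.div_re, Complex.mul_re, Complex.mul_im, Complex.add_re, Complex.add_im,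
      Complex.sub_re, Complex.sub_im, Complex.I_re, Complex.I_im, Complex.ofReal_re,
      Complex.ofReal_im, Complex.conj_re, Complex.conj_im, Complex.normSq_apply]
    norm_num
    ring
  have hBpp : B p p = ∑ α, ∑ β,
      ((w α).re * (w β).re * B (EuclideanSpace.single α 1) (EuclideanSpace.single β 1)
        + (w α).re * (w β).im * B (EuclideanSpace.single α 1) (EuclideanSpace.single β Complex.I)
        + (w α).im * (w β).re * B (EuclideanSpace.single α Complex.I) (EuclideanSpace.single β 1)
        + (w α).im * (w β).im * B (EuclideanSpace.single α Complex.I) (EuclideanSpace.single β Complex.I)) := by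
    have houter : B p = ∑ α, ((w α).re • B (EuclideanSpace.single α 1)
        + (w α).im • B (EuclideanSpace.single α Complex.I)) := by
      rw [hpdef]; exact clm_p_apply B _ _
    calc B p p = ∑ α, ((w α).re • (B (EuclideanSpace.single α 1) p)
        + (w α).im • (B (EuclideanSpace.single α Complex.I) p)) := by
          rw [houter]; simp [ContinuousLinearMap.sum_apply]
      _ = _ := by
          refine Finset.sum_congr rfl fun α _ => ?_
          rw [hpdef, clm_p_apply (B (EuclideanSpace.single α 1)),
            clm_p_apply (B (EuclideanSpace.single α Complex.I))]
          simp only [smul_eq_mul, Finset.mul_sum, ← Finset.sum_add_distrib]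
          exact Finset.sum_congr rfl fun β _ => by ring
  have hBpIpI : B pI pI = ∑ α, ∑ β,
      ((-(w α).im) * (-(w β).im) * B (EuclideanSpace.single α 1) (EuclideanSpace.single β 1)
        + (-(w α).im) * (w β).re * B (EuclideanSpace.single α 1) (EuclideanSpace.single β Complex.I)
        + (w α).re * (-(w β).im) * B (EuclideanSpace.single α Complex.I) (EuclideanSpace.single β 1)
        + (w α).re * (w β).re * B (EuclideanSpace.single α Complex.I) (EuclideanSpace.single β Complex.I)) := by
    have houter : B pI = ∑ α, ((-(w α).im) • B (EuclideanSpace.single α 1)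
        + (w α).re • B (EuclideanSpace.single α Complex.I)) := by
      rw [hpIdef]; exact clm_p_apply B _ _
    calc B pI pI = ∑ α, ((-(w α).im) • (B (EuclideanSpace.single α 1) pI)
        + (w α).re • (B (EuclideanSpace.single α Complex.I) pI)) := by
          rw [houter]; simp [ContinuousLinearMap.sum_apply]
      _ = _ := by
          refine Finset.sum_congr rfl fun α _ => ?_
          rw [hpIdef, clm_p_apply (B (EuclideanSpace.single α 1)),
            clm_p_apply (B (EuclideanSpace.single α Complex.I))]
          simp only [smul_eq_mul, Finset.mul_sum, ← Finset.sum_add_distrib]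
          exact Finset.sum_congr rfl fun β _ => by ring
  have hiden : ∑ α, ∑ β, ((4⁻¹ : ℝ) *
        ((B (EuclideanSpace.single α 1) (EuclideanSpace.single β 1)
            + B (EuclideanSpace.single α Complex.I) (EuclideanSpace.single β Complex.I))
          * ((w α).re * (w β).re + (w α).im * (w β).im)
        - (B (EuclideanSpace.single α 1) (EuclideanSpace.single β Complex.I)
            - B (EuclideanSpace.single α Complex.I) (EuclideanSpace.single β 1))
          * ((w α).im * (w β).re - (w α).re * (w β).im)))
      = (4⁻¹ : ℝ) * (B p p + B pI pI) := by
    have key : ∀ α β : Fin n, ((4⁻¹ : ℝ) *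
        ((B (EuclideanSpace.single α 1) (EuclideanSpace.single β 1)
            + B (EuclideanSpace.single α Complex.I) (EuclideanSpace.single β Complex.I))
          * ((w α).re * (w β).re + (w α).im * (w β).im)
        - (B (EuclideanSpace.single α 1) (EuclideanSpace.single β Complex.I)
            - B (EuclideanSpace.single α Complex.I) (EuclideanSpace.single β 1))
          * ((w α).im * (w β).re - (w α).re * (w β).im)))
        + ((4⁻¹ : ℝ) *
        ((B (EuclideanSpace.single β 1) (EuclideanSpace.single α 1)
            + B (EuclideanSpace.single β Complex.I) (EuclideanSpace.single α Complex.I))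
          * ((w β).re * (w α).re + (w β).im * (w α).im)
        - (B (EuclideanSpace.single β 1) (EuclideanSpace.single α Complex.I)
            - B (EuclideanSpace.single β Complex.I) (EuclideanSpace.single α 1))
          * ((w β).im * (w α).re - (w β).re * (w α).im)))
        = ((4⁻¹ : ℝ) *
        (((w α).re * (w β).re * B (EuclideanSpace.single α 1) (EuclideanSpace.single β 1)
        + (w α).re * (w β).im * B (EuclideanSpace.single α 1) (EuclideanSpace.single β Complex.I)
        + (w α).im * (w β).re * B (EuclideanSpace.single α Complex.I) (EuclideanSpace.single β 1)
        + (w α).im * (w β).im * B (EuclideanSpace.single α Complex.I) (EuclideanSpace.single β Complex.I))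
        + ((-(w α).im) * (-(w β).im) * B (EuclideanSpace.single α 1) (EuclideanSpace.single β 1)
        + (-(w α).im) * (w β).re * B (EuclideanSpace.single α 1) (EuclideanSpace.single β Complex.I)
        + (w α).re * (-(w β).im) * B (EuclideanSpace.single α Complex.I) (EuclideanSpace.single β 1)
        + (w α).re * (w β).re * B (EuclideanSpace.single α Complex.I) (EuclideanSpace.single β Complex.I))))
        + ((4⁻¹ : ℝ) *
        (((w β).re * (w α).re * B (EuclideanSpace.single β 1) (EuclideanSpace.single α 1)
        + (w β).re * (w α).im * B (EuclideanSpace.single β 1) (EuclideanSpace.single α Complex.I)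
        + (w β).im * (w α).re * B (EuclideanSpace.single β Complex.I) (EuclideanSpace.single α 1)
        + (w β).im * (w α).im * B (EuclideanSpace.single β Complex.I) (EuclideanSpace.single α Complex.I))
        + ((-(w β).im) * (-(w α).im) * B (EuclideanSpace.single β 1) (EuclideanSpace.single α 1)
        + (-(w β).im) * (w α).re * B (EuclideanSpace.single β 1) (EuclideanSpace.single α Complex.I)
        + (w β).re * (-(w α).im) * B (EuclideanSpace.single β Complex.I) (EuclideanSpace.single α 1)
        + (w β).re * (w α).re * B (EuclideanSpace.single β Complex.I) (EuclideanSpace.single α Complex.I)))) := by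
      intro α β
      rw [hSu (EuclideanSpace.single β 1) (EuclideanSpace.single α 1),
        hSu (EuclideanSpace.single β 1) (EuclideanSpace.single α Complex.I),
        hSu (EuclideanSpace.single β Complex.I) (EuclideanSpace.single α 1),
        hSu (EuclideanSpace.single β Complex.I) (EuclideanSpace.single α Complex.I)]
      ring
    have h0 := sum_symm_eq _ _ key
    rw [h0, hBpp, hBpIpI, mul_add, Finset.mul_sum, Finset.mul_sum, ← Finset.sum_add_distrib]
    refine Finset.sum_congr rfl fun α _ => ?_
    rw [Finset.mul_sum, Finset.mul_sum, ← Finset.sum_add_distrib]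
    refine Finset.sum_congr rfl fun β _ => ?_
    ring
  rw [hsum, hiden]
  -- Step II: the second derivative along a complex line
  have hBvv : ∀ v : EuclideanSpace ℂ (Fin n), B v v =
      ((∑ γ, 2 * (Complex.normSq (fderiv ℝ (g γ) z v)
          + ((starRingEnd ℂ) (g γ z) * fderiv ℝ (fun ζ => fderiv ℝ (g γ) ζ v) z v).re))
        * (1 + qR z)
       - (∑ γ, 2 * ((starRingEnd ℂ) (g γ z) * fderiv ℝ (g γ) z v).re)
         * (∑ γ, 2 * ((starRingEnd ℂ) (g γ z) * fderiv ℝ (g γ) z v).re))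
      / (1 + qR z) ^ 2 := by
    intro v
    set L : ℝ → EuclideanSpace ℂ (Fin n) := fun t => z + t • v with hLdef
    have hL : ∀ t, HasDerivAt L v t := fun t => by
      simpa [hLdef] using ((hasDerivAt_id t).smul_const v).const_add z
    have hL0 : L 0 = z := by simp [hLdef]
    have hG : ∀ γ t, HasDerivAt (fun s => g γ (L s)) (fderiv ℝ (g γ) (L t) v) t := fun γ t =>
      ((hgD γ (L t)).hasFDerivAt).comp_hasDerivAt t (hL t)
    have hQ : ∀ t, HasDerivAt (fun s => qR (L s))
        (∑ γ, 2 * ((starRingEnd ℂ) (g γ (L t)) * fderiv ℝ (g γ) (L t) v).re) t := by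
      intro t
      exact HasDerivAt.fun_sum fun γ _ => hasDerivAt_normSq (hG γ t)
    have hphi : ∀ t, HasDerivAt (fun s => uR (L s))
        ((∑ γ, 2 * ((starRingEnd ℂ) (g γ (L t)) * fderiv ℝ (g γ) (L t) v).re)
          / (1 + qR (L t))) t := by
      intro t
      exact (((hQ t).const_add 1).log (hqpos (L t)).ne')
    have hdphi : deriv (fun s => uR (L s)) = fun t =>
        (∑ γ, 2 * ((starRingEnd ℂ) (g γ (L t)) * fderiv ℝ (g γ) (L t) v).re)
          / (1 + qR (L t)) := funext fun t => (hphi t).deriv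
    have hΓ : ∀ γ, HasDerivAt (fun s => fderiv ℝ (g γ) (L s) v)
        (fderiv ℝ (fun ζ => fderiv ℝ (g γ) ζ v) z v) 0 := by
      intro γ
      have h := ((((hddgC γ v).differentiable two_ne_zero) (L 0)).hasFDerivAt).comp_hasDerivAt
        0 (hL 0)
      rwa [hL0] at h
    have hR : HasDerivAt (fun t => ∑ γ, 2 * ((starRingEnd ℂ) (g γ (L t))
          * fderiv ℝ (g γ) (L t) v).re)
        (∑ γ, 2 * (Complex.normSq (fderiv ℝ (g γ) z v)
          + ((starRingEnd ℂ) (g γ z) * fderiv ℝ (fun ζ => fderiv ℝ (g γ) ζ v) z v).re)) 0 := by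
      refine HasDerivAt.fun_sum fun γ _ => ?_
      have hstar : HasDerivAt (fun s => (starRingEnd ℂ) (g γ (L s)))
          ((starRingEnd ℂ) (fderiv ℝ (g γ) z v)) 0 := by
        have h := (hG γ 0).star
        rw [hL0] at h
        exact h
      have hmul := hstar.mul (hΓ γ)
      have hre := Complex.reCLM.hasFDerivAt.comp_hasDerivAt 0 hmul
      have h2 := hre.const_mul (2:ℝ)
      have hval : (2:ℝ) * (Complex.reCLM ((starRingEnd ℂ) (fderiv ℝ (g γ) z v)
            * fderiv ℝ (g γ) (L 0) v
          + (starRingEnd ℂ) (g γ (L 0)) * fderiv ℝ (fun ζ => fderiv ℝ (g γ) ζ v) z v))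
          = 2 * (Complex.normSq (fderiv ℝ (g γ) z v)
          + ((starRingEnd ℂ) (g γ z) * fderiv ℝ (fun ζ => fderiv ℝ (g γ) ζ v) z v).re) := by
        rw [hL0]
        have hns : (starRingEnd ℂ) (fderiv ℝ (g γ) z v) * fderiv ℝ (g γ) z v
            = ((Complex.normSq (fderiv ℝ (g γ) z v) : ℝ) : ℂ) := by
          rw [mul_comm, Complex.mul_conj]
        simp [hns]
      rw [hval] at h2
      exact h2
    have hden : HasDerivAt (fun t => 1 + qR (L t))
        (∑ γ, 2 * ((starRingEnd ℂ) (g γ (L 0)) * fderiv ℝ (g γ) (L 0) v).re) 0 :=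
      (hQ 0).const_add 1
    have hfinal := hR.fun_div hden (by rw [hL0]; exact (hqpos z).ne')
    rw [hL0] at hfinal
    have hddu : HasDerivAt (fun t => fderiv ℝ uR (L t) v)
        (fderiv ℝ (fun ζ => fderiv ℝ uR ζ v) z v) 0 := by
      have h := ((((hdduC v).differentiable two_ne_zero) (L 0)).hasFDerivAt).comp_hasDerivAt
        0 (hL 0)
      rwa [hL0] at h
    have hbridge : deriv (fun s => uR (L s)) = fun t => fderiv ℝ uR (L t) v :=
      funext fun t => (((huD (L t)).hasFDerivAt).comp_hasDerivAt t (hL t)).deriv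
    have e1 : deriv (deriv (fun s => uR (L s))) 0
        = fderiv ℝ (fun ζ => fderiv ℝ uR ζ v) z v := by
      rw [hbridge]; exact hddu.deriv
    have e2 := hfinal.deriv
    rw [hdphi] at e1
    rw [hBdef, ← dd_fderiv (huC.of_le (by norm_num : (2 : WithTop ℕ∞) ≤ 3)) z v v, ← e1, e2]
  have hvp := hBvv p
  have hvpI := hBvv pI
  set T : ℂ := ∑ γ, (starRingEnd ℂ) (g γ z) * fderiv ℝ (g γ) z p with hTdef
  set N : ℝ := ∑ γ, Complex.normSq (fderiv ℝ (g γ) z p) with hNdef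
  set M : ℝ := ∑ γ, ((starRingEnd ℂ) (g γ z)
    * fderiv ℝ (fun ζ => fderiv ℝ (g γ) ζ p) z p).re with hMdef
  have hs1 : (∑ γ, 2 * ((starRingEnd ℂ) (g γ z) * fderiv ℝ (g γ) z p).re) = 2 * T.re := by
    rw [hTdef, Complex.re_sum, Finset.mul_sum]
  have hs3 : (∑ γ, 2 * (Complex.normSq (fderiv ℝ (g γ) z p)
      + ((starRingEnd ℂ) (g γ z) * fderiv ℝ (fun ζ => fderiv ℝ (g γ) ζ p) z p).re))
      = 2 * N + 2 * M := by
    rw [hNdef, hMdef, Finset.mul_sum, Finset.mul_sum, ← Finset.sum_add_distrib]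
    exact Finset.sum_congr rfl fun γ _ => by ring
  have hs2 : (∑ γ, 2 * ((starRingEnd ℂ) (g γ z) * fderiv ℝ (g γ) z pI).re)
      = -(2 * T.im) := by
    have h : ∀ γ : Fin n, 2 * ((starRingEnd ℂ) (g γ z) * fderiv ℝ (g γ) z pI).re
        = -(2 * ((starRingEnd ℂ) (g γ z) * fderiv ℝ (g γ) z p).im) := by
      intro γ
      rw [hCRp z hz γ]
      simp [Complex.mul_re, Complex.mul_im]
      ring
    rw [Finset.sum_congr rfl fun γ _ => h γ, hTdef, Complex.im_sum, Finset.mul_sum,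
      ← Finset.sum_neg_distrib]
  have hs4 : (∑ γ, 2 * (Complex.normSq (fderiv ℝ (g γ) z pI)
      + ((starRingEnd ℂ) (g γ z) * fderiv ℝ (fun ζ => fderiv ℝ (g γ) ζ pI) z pI).re))
      = 2 * N - 2 * M := by
    have h : ∀ γ : Fin n, 2 * (Complex.normSq (fderiv ℝ (g γ) z pI)
        + ((starRingEnd ℂ) (g γ z) * fderiv ℝ (fun ζ => fderiv ℝ (g γ) ζ pI) z pI).re)
        = 2 * Complex.normSq (fderiv ℝ (g γ) z p)
          - 2 * ((starRingEnd ℂ) (g γ z) * fderiv ℝ (fun ζ => fderiv ℝ (g γ) ζ p) z p).re := by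
      intro γ
      rw [hCRp z hz γ, hCR2 γ]
      simp [Complex.normSq_mul, Complex.normSq_I]
      ring
    rw [Finset.sum_congr rfl fun γ _ => h γ, hNdef, hMdef, Finset.mul_sum, Finset.mul_sum,
      ← Finset.sum_sub_distrib]
  rw [hvp, hvpI, hs1, hs2, hs3, hs4]
  have hc := hqpos z
  have hq0 : 0 ≤ qR z := by
    rw [hqRdef]; exact Finset.sum_nonneg fun γ _ => Complex.normSq_nonneg _
  have hN0 : 0 ≤ N := by
    rw [hNdef]; exact Finset.sum_nonneg fun γ _ => Complex.normSq_nonneg _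
  have habs : ‖T‖ ≤ ∑ γ, ‖g γ z‖ * ‖fderiv ℝ (g γ) z p‖ := by
    rw [hTdef]
    refine le_trans (norm_sum_le _ _) (le_of_eq (Finset.sum_congr rfl fun γ _ => ?_))
    rw [norm_mul, Complex.norm_conj]
  have hcs := Finset.sum_mul_sq_le_sq_mul_sq Finset.univ (fun γ => ‖g γ z‖)
    (fun γ => ‖fderiv ℝ (g γ) z p‖)
  have hq_eq : (∑ γ, ‖g γ z‖ ^ 2) = qR z := by
    rw [hqRdef]; exact Finset.sum_congr rfl fun γ _ => Complex.sq_norm _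
  have hN_eq : (∑ γ, ‖fderiv ℝ (g γ) z p‖ ^ 2) = N := by
    rw [hNdef]; exact Finset.sum_congr rfl fun γ _ => Complex.sq_norm _
  rw [hq_eq, hN_eq] at hcs
  have hT2 : Complex.normSq T ≤ qR z * N := by
    rw [← Complex.sq_norm]
    exact le_trans (pow_le_pow_left₀ (norm_nonneg _) habs 2) hcs
  rw [← add_div]
  apply mul_nonneg (by norm_num)
  apply div_nonneg _ (sq_nonneg _)
  nlinarith [hT2, hN0, hq0, Complex.normSq_apply T]
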